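/- If U is an LMES of Φ, then U is an irreducible hitting set of coLMNS(Φ). -/

import Mathlib

/-!
Equivalence of `Φ|_S` with `Φ` is upward closed in `S`. Hence an equivalent `U` meets the
complement of every LMNS, as otherwise it would lie inside that non-equivalent set. Conversely, a
proper subset of an LMES is non-equivalent by minimality, so it extends to an LMNS and misses its
complement.
-/

namespace LCNFStmt

/-- A clause is a finite set of literals (variable, polarity). -/
abbrev Clause (V : Type) := Finset (V × Bool)

def ClauseSat {V : Type} (τ : V → Bool) (c : Clause V) : Prop :=
  ∃ p ∈ c, τ p.1 = p.2

/-- τ is a model of a CNF formula (finite set of clauses). -/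
def Sat {V : Type} (τ : V → Bool) (F : Finset (Clause V)) : Prop :=
  ∀ c ∈ F, ClauseSat τ c

/-- Logical equivalence of CNF formulas: same models. -/
def Equiv {V : Type} (F₁ F₂ : Finset (Clause V)) : Prop :=
  ∀ τ, Sat τ F₁ ↔ Sat τ F₂

/-- F₁ implies F₂: every model of F₁ is a model of F₂. -/
def Implies {V : Type} (F₁ F₂ : Finset (Clause V)) : Prop :=
  ∀ τ, Sat τ F₁ → Sat τ F₂

/-- A labelled CNF formula: a CNF formula together with a labelling function. -/
structure LCNF (V L : Type) where
  F : Finset (Clause V)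
  lab : Clause V → Finset L

variable {V L : Type} [DecidableEq V] [DecidableEq L]

/-- The set of active labels λ(Φ). -/
def LCNF.active (Φ : LCNF V L) : Finset L := Φ.F.biUnion Φ.lab

/-- Clause set of the induced subformula Φ|_S : clauses all of whose labels lie in S. -/
def LCNF.restrict (Φ : LCNF V L) (S : Finset L) : Finset (Clause V) :=
  Φ.F.filter (fun c => Φ.lab c ⊆ S)

/-- Φ|_S ≡ Φ. -/
def LCNF.EquivTo (Φ : LCNF V L) (S : Finset L) : Prop :=
  Equiv (Φ.restrict S) Φ.F

/-- A label is redundant in Φ if removing it keeps the formula equivalent. -/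
def LCNF.Redundant (Φ : LCNF V L) (l : L) : Prop :=
  Φ.EquivTo (Φ.active.erase l)

/-- Labelled minimal equivalent subset. -/
def LCNF.LMES (Φ : LCNF V L) (S : Finset L) : Prop :=
  S ⊆ Φ.active ∧ Φ.EquivTo S ∧ ∀ S' ⊂ S, ¬ Φ.EquivTo S'

/-- Labelled maximal non-equivalent subset. -/
def LCNF.LMNS (Φ : LCNF V L) (S : Finset L) : Prop :=
  S ⊆ Φ.active ∧ ¬ Φ.EquivTo S ∧ ∀ S', S ⊂ S' → S' ⊆ Φ.active → Φ.EquivTo S'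

/-- Labelled maximal satisfiable subset. -/
def LCNF.LMSS (Φ : LCNF V L) (S : Finset L) : Prop :=
  S ⊆ Φ.active ∧ (∃ τ, Sat τ (Φ.restrict S)) ∧
    ∀ S', S ⊂ S' → S' ⊆ Φ.active → ¬ ∃ τ, Sat τ (Φ.restrict S')

/-- Hitting set of a collection of finite sets. -/
def HittingSet {α : Type} [DecidableEq α] (𝒮 : Set (Finset α)) (H : Finset α) : Prop :=
  ∀ A ∈ 𝒮, (H ∩ A).Nonempty

/-- Irreducible hitting set. -/
def IrredHittingSet {α : Type} [DecidableEq α] (𝒮 : Set (Finset α)) (H : Finset α) : Prop :=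
  HittingSet 𝒮 H ∧ ∀ H' ⊂ H, ¬ HittingSet 𝒮 H'

end LCNFStmt

namespace LCNFStmt

variable {V L : Type} [DecidableEq L]

theorem Sat.mono {τ : V → Bool} {F₁ F₂ : Finset (Clause V)} (h : Sat τ F₂)
    (hF : F₁ ⊆ F₂) : Sat τ F₁ :=
  fun c hc => h c (hF hc)

namespace LCNF

theorem restrict_subset (Φ : LCNF V L) (S : Finset L) : Φ.restrict S ⊆ Φ.F :=
  Finset.filter_subset _ _

theorem restrict_mono (Φ : LCNF V L) {S T : Finset L} (hST : S ⊆ T) :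
    Φ.restrict S ⊆ Φ.restrict T := by
  intro c hc
  simp only [restrict, Finset.mem_filter] at hc ⊢
  exact ⟨hc.1, hc.2.trans hST⟩

theorem EquivTo.mono {Φ : LCNF V L} {S T : Finset L} (hS : Φ.EquivTo S) (hST : S ⊆ T) :
    Φ.EquivTo T :=
  fun τ => ⟨fun h => (hS τ).1 (h.mono (Φ.restrict_mono hST)),
    fun h => h.mono (Φ.restrict_subset T)⟩

theorem exists_LMNS_superset (Φ : LCNF V L) {S : Finset L} (hS : S ⊆ Φ.active)
    (hne : ¬ Φ.EquivTo S) : ∃ T, S ⊆ T ∧ Φ.LMNS T := by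
  set 𝒯 : Set (Finset L) := {T | S ⊆ T ∧ T ⊆ Φ.active ∧ ¬ Φ.EquivTo T}
  have h𝒯 : 𝒯.Finite := Φ.active.powerset.finite_toSet.subset
    fun T hT => Finset.mem_coe.2 (Finset.mem_powerset.2 hT.2.1)
  obtain ⟨T, hST, ⟨-, hTact, hTne⟩, hTmax⟩ := h𝒯.exists_le_maximal ⟨subset_rfl, hS, hne⟩
  refine ⟨T, hST, hTact, hTne, fun T' hTT' hT'act => ?_⟩
  by_contra hT'ne
  exact hTT'.not_subset (hTmax ⟨hST.trans hTT'.subset, hT'act, hT'ne⟩ hTT'.subset)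

def coLMNS (Φ : LCNF V L) : Set (Finset L) :=
  {M | M ⊆ Φ.active ∧ Φ.LMNS (Φ.active \ M)}

theorem LMNS.sdiff_mem_coLMNS {Φ : LCNF V L} {S : Finset L} (hS : Φ.LMNS S) :
    Φ.active \ S ∈ Φ.coLMNS :=
  ⟨Finset.sdiff_subset, by rwa [Finset.sdiff_sdiff_eq_self hS.1]⟩

theorem hittingSet_coLMNS_of_equivTo {Φ : LCNF V L} {U : Finset L} (hUact : U ⊆ Φ.active)
    (hU : Φ.EquivTo U) : HittingSet Φ.coLMNS U := by
  rintro M ⟨-, -, hne, -⟩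
  by_contra hUM
  refine hne (hU.mono fun x hx => Finset.mem_sdiff.2 ⟨hUact hx, fun hxM => hUM ?_⟩)
  exact ⟨x, Finset.mem_inter.2 ⟨hx, hxM⟩⟩

theorem not_hittingSet_coLMNS_of_not_equivTo {Φ : LCNF V L} {H : Finset L}
    (hHact : H ⊆ Φ.active) (hH : ¬ Φ.EquivTo H) : ¬ HittingSet Φ.coLMNS H := by
  intro hhit
  obtain ⟨S, hHS, hS⟩ := Φ.exists_LMNS_superset hHact hH
  obtain ⟨x, hx⟩ := hhit _ hS.sdiff_mem_coLMNS
  rw [Finset.mem_inter, Finset.mem_sdiff] at hx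
  exact hx.2.2 (hHS hx.1)

end LCNF

theorem lmes_is_irred_hs_of_colmns_general {V L : Type} [DecidableEq L]
    (Φ : LCNF V L) (U : Finset L) (hlmes : Φ.LMES U) :
    IrredHittingSet {M | M ⊆ Φ.active ∧ Φ.LMNS (Φ.active \ M)} U := by
  obtain ⟨hUact, hU, hUmin⟩ := hlmes
  exact ⟨LCNF.hittingSet_coLMNS_of_equivTo hUact hU, fun H hHU =>
    LCNF.not_hittingSet_coLMNS_of_not_equivTo (hHU.subset.trans hUact) (hUmin H hHU)⟩

theorem lmes_is_irred_hs_of_colmns {V L : Type} [DecidableEq V] [DecidableEq L]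
    (Φ : LCNF V L) (hne : Φ.active.Nonempty)
    (hunlab : (∃ c ∈ Φ.F, Φ.lab c = ∅) → ∃ l ∈ Φ.active, ¬ Φ.Redundant l)
    (U : Finset L) (hlmes : Φ.LMES U) :
    IrredHittingSet {M | M ⊆ Φ.active ∧ Φ.LMNS (Φ.active \ M)} U :=
  lmes_is_irred_hs_of_colmns_general Φ U hlmes

end LCNFStmt
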